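/- Let 1 < √b < a ≤ b ≤ 2, let α : ℝ → [a,b] be continuous, let λ > 0, and let u ∈ ℝ satisfy |α(u) − α(v)| = o(1/|log|u−v||) as v → u. Define f(t,x) = exp(−λ(x−t))·1_{[t,∞)}(x). Then for every t ∈ ℝ, lim_{r→0⁺} ∫_ℝ | (f(u+rt, u+rz) − f(u, u+rz)) / r^{1/α(u) − 1/α(u+rz)} + s(t,z) |^{a,b} dz = 0, where s(t,z) = 1_{(0,t)}(z) if t ≥ 0 and s(t,z) = −1_{(t,0)}(z) if t < 0. Consequently the multistable reverse Ornstein–Uhlenbeck process Y(t) = ∫_t^∞ exp(−λ(x−t)) dM_α(x) satisfies the localisability condition of the main theorem at u with index h₀ = 1/α(u) and local form kernel k(t,z) = −s(t,z). -/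

import Mathlib

open MeasureTheory Filter Set Topology ProbabilityTheory BoundedContinuousFunction

noncomputable section

/-- Membership in `F_α`: `f` is measurable and either a.e. zero or there is a (unique)
`λ > 0` with `∫ |f(x)/λ|^{α(x)} dx = 1`. -/
def MemFalpha (α f : ℝ → ℝ) : Prop :=
  Measurable f ∧ (f =ᵐ[volume] (0 : ℝ → ℝ) ∨ ∃ lam > (0:ℝ), ∫ x : ℝ, |f x / lam| ^ α x = 1)

/-- The quasinorm `‖f‖_α`, the unique `λ > 0` with `∫ |f(x)/λ|^{α(x)} dx = 1`
(and `0` if no such `λ` exists, e.g. if `f = 0` a.e.). -/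
def alphaNorm (α f : ℝ → ℝ) : ℝ :=
  sInf {lam : ℝ | 0 < lam ∧ ∫ x : ℝ, |f x / lam| ^ α x = 1}

/-- `|s|^{a,b} = max{|s|^a, |s|^b}`. -/
def pab (a b s : ℝ) : ℝ := max (|s| ^ a) (|s| ^ b)

/-- Membership in `F_{a,b}`: measurable with `∫ |f(x)|^{a,b} dx < ∞`. -/
def MemFab (a b : ℝ) (f : ℝ → ℝ) : Prop :=
  Measurable f ∧ Integrable (fun x : ℝ => pab a b (f x))

/-- The norm `‖f‖_p = (∫ |f(x)|^p dx)^{1/p}`. -/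
def pNorm (p : ℝ) (f : ℝ → ℝ) : ℝ := (∫ x : ℝ, |f x| ^ p) ^ (1 / p)

/-- Membership in `E₀`: Lebesgue measurable with finite Lebesgue measure. -/
def MemE0 (A : Set ℝ) : Prop := MeasurableSet A ∧ volume A < ⊤

/-- The signed open-interval indicator `s(t,z)`: `1_{(0,t)}(z)` if `t ≥ 0` and
`−1_{(t,0)}(z)` if `t < 0`. -/
def sgnIndOpen (t z : ℝ) : ℝ :=
  if 0 ≤ t then (Set.Ioo 0 t).indicator (fun _ => (1:ℝ)) z
  else -((Set.Ioo t 0).indicator (fun _ => (1:ℝ)) z)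


/-!
After the substitution `x = u + r z` the kernel difference at `(u + r t, u)` becomes the one at
`(t, 0)` with rate `λ r`, so the integrand vanishes left of `min t 0`. Between `0` and `t` it is
`±(exp (-λ r y - E log r) - 1)` with `E = 1/α(u) - 1/α(u + r z)`, and the logarithmic modulus of
continuity of `α` at `u` makes `E log r` uniformly small there, so this part is `o(1)`. Right of
`max t 0` it is at most `2 |t| λ r^(1-c) e^(-λ r z)` with `c = 1/a - 1/b`, whose `p`-th power
integrates to `O(r^(p(1-c)-1))`; for `p = a` and `p = b` the exponent is positive because
`√b < a` and `1 < a`.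
-/

section Pab

variable {a b : ℝ}

lemma pab_nonneg (a b s : ℝ) : 0 ≤ pab a b s :=
  le_max_of_le_left (Real.rpow_nonneg (abs_nonneg s) a)

lemma pab_zero (ha : a ≠ 0) (hb : b ≠ 0) : pab a b 0 = 0 := by
  simp [pab, Real.zero_rpow ha, Real.zero_rpow hb]

lemma pab_le_pab (ha : 0 ≤ a) (hb : 0 ≤ b) {s x : ℝ} (h : |s| ≤ x) : pab a b s ≤ pab a b x := by
  have hx : |s| ≤ |x| := h.trans (le_abs_self x)
  exact max_le_max (Real.rpow_le_rpow (abs_nonneg _) hx ha)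
    (Real.rpow_le_rpow (abs_nonneg _) hx hb)

lemma pab_le_rpow_add_rpow {x : ℝ} (hx : 0 ≤ x) : pab a b x ≤ x ^ a + x ^ b := by
  rw [pab, abs_of_nonneg hx]
  exact max_le (le_add_of_nonneg_right (Real.rpow_nonneg hx b))
    (le_add_of_nonneg_left (Real.rpow_nonneg hx a))

lemma continuous_pab (ha : 0 ≤ a) (hb : 0 ≤ b) : Continuous (pab a b) :=
  ((Real.continuous_rpow_const ha).comp continuous_abs).max
    ((Real.continuous_rpow_const hb).comp continuous_abs)

end Pab

lemma rpow_mul_exp_neg_mul {K : ℝ} (hK : 0 ≤ K) (p μ z : ℝ) :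
    (K * Real.exp (-μ * z)) ^ p = K ^ p * Real.exp (-(p * μ) * z) := by
  rw [Real.mul_rpow hK (Real.exp_pos _).le, ← Real.exp_mul]
  ring_nf

lemma integrableOn_Ioi_rpow_mul_exp_neg_mul {K p μ : ℝ} (hK : 0 ≤ K) (hp : 0 < p) (hμ : 0 < μ)
    (M : ℝ) : IntegrableOn (fun z => (K * Real.exp (-μ * z)) ^ p) (Ioi M) := by
  simp_rw [rpow_mul_exp_neg_mul hK]
  exact (exp_neg_integrableOn_Ioi M (mul_pos hp hμ)).const_mul _

lemma setIntegral_Ioi_rpow_mul_exp_neg_mul_le {K p μ M : ℝ} (hK : 0 ≤ K) (hp : 0 < p)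
    (hμ : 0 < μ) (hM : 0 ≤ M) :
    ∫ z in Ioi M, (K * Real.exp (-μ * z)) ^ p ≤ K ^ p / (p * μ) := by
  have hpμ : 0 < p * μ := mul_pos hp hμ
  simp_rw [rpow_mul_exp_neg_mul hK]
  rw [integral_const_mul, integral_exp_mul_Ioi (by linarith) M, neg_div, ← div_neg, neg_neg,
    ← mul_div_assoc]
  refine div_le_div_of_nonneg_right (mul_le_of_le_one_right (by positivity) ?_) hpμ.le
  exact Real.exp_le_one_iff.2 (by nlinarith)

lemma tendsto_rpow_div_mul_nhdsGT_zero {C lam c p : ℝ} (hC : 0 ≤ C) (hlam : 0 ≤ lam)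
    (hp : 1 < p * (1 - c)) :
    Tendsto (fun r => (C * (lam * r) / r ^ c) ^ p / (p * (lam * r))) (𝓝[>] 0) (𝓝 0) := by
  have hlim : Tendsto (fun r : ℝ => (C * lam) ^ p / (p * lam) * r ^ (p * (1 - c) - 1)) (𝓝[>] 0)
      (𝓝 ((C * lam) ^ p / (p * lam) * 0)) := by
    refine (tendsto_const_nhds.mul ?_).mono_left nhdsWithin_le_nhds
    simpa [Real.zero_rpow (by linarith : p * (1 - c) - 1 ≠ 0)] using
      (Real.continuousAt_rpow_const 0 (p * (1 - c) - 1) (Or.inr (by linarith))).tendsto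
  rw [mul_zero] at hlim
  refine hlim.congr' (eventually_nhdsWithin_of_forall fun r (hr : 0 < r) => ?_)
  dsimp only
  have hbase : C * (lam * r) / r ^ c = C * lam * r ^ (1 - c) := by
    rw [Real.rpow_sub hr, Real.rpow_one]; ring
  rw [hbase, Real.mul_rpow (mul_nonneg hC hlam) (Real.rpow_nonneg hr.le _), ← Real.rpow_mul hr.le,
    show (1 - c) * p = (p * (1 - c) - 1) + 1 by ring, Real.rpow_add hr, Real.rpow_one,
    ← mul_assoc, ← mul_assoc, mul_div_mul_right _ _ hr.ne', mul_div_right_comm]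

lemma abs_log_le_two_mul_abs_log {r y : ℝ} (hy : 0 < y) (hyr : y ^ 2 ≤ r) (hr : r < 1) :
    |Real.log r| ≤ 2 * |Real.log y| := by
  have hlog : 2 * Real.log y ≤ Real.log r := by
    simpa [Real.log_pow] using Real.log_le_log (by positivity) hyr
  have hr0 : Real.log r < 0 := Real.log_neg ((pow_pos hy 2).trans_le hyr) hr
  rw [abs_of_neg hr0, abs_of_neg (by linarith)]
  linarith

lemma abs_one_div_sub_one_div_le {a x y : ℝ} (ha : 0 < a) (hx : a ≤ x) (hy : a ≤ y) :
    |1 / x - 1 / y| ≤ |x - y| / a ^ 2 := by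
  have hx0 : 0 < x := ha.trans_le hx
  have hy0 : 0 < y := ha.trans_le hy
  rw [div_sub_div _ _ hx0.ne' hy0.ne', abs_div, abs_of_pos (mul_pos hx0 hy0), one_mul, mul_one,
    abs_sub_comm]
  exact div_le_div_of_nonneg_left (abs_nonneg _) (by positivity) (by nlinarith)

lemma one_lt_mul_one_sub_one_div_sub_one_div_left {a b : ℝ} (hb : 1 < Real.sqrt b)
    (hba : Real.sqrt b < a) : 1 < a * (1 - (1 / a - 1 / b)) := by
  have hb0 : 0 < b := one_pos.trans (by simpa using (Real.lt_sqrt zero_le_one).1 hb)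
  have ha0 : 0 < a := by linarith
  -- `a (b + 1) > √b (b + 1) ≥ 2b` by AM-GM
  have hkey : 2 * b < a * (b + 1) := by
    nlinarith [sq_nonneg (Real.sqrt b - 1), Real.sq_sqrt hb0.le]
  have : a * (1 - (1 / a - 1 / b)) - 1 = (a * (b + 1) - 2 * b) / b := by field_simp; ring
  linarith [div_pos (sub_pos.2 hkey) hb0]

lemma one_lt_mul_one_sub_one_div_sub_one_div_right {a b : ℝ} (ha : 1 < a) (hab : a ≤ b) :
    1 < b * (1 - (1 / a - 1 / b)) := by
  have hb0 : 0 < b := by linarith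
  have : b * (1 - (1 / a - 1 / b)) - 1 = b * (a - 1) / a := by field_simp; ring
  linarith [div_pos (mul_pos hb0 (sub_pos.2 ha)) (by linarith : (0:ℝ) < a)]

lemma abs_one_div_sub_one_div_le_of_mem_Icc {a b x y : ℝ} (ha : 0 < a) (hx : x ∈ Icc a b)
    (hy : y ∈ Icc a b) : |1 / x - 1 / y| ≤ 1 / a - 1 / b := by
  have bound : ∀ w ∈ Icc a b, 1 / b ≤ 1 / w ∧ 1 / w ≤ 1 / a := fun w hw =>
    ⟨one_div_le_one_div_of_le (ha.trans_le hw.1) hw.2, one_div_le_one_div_of_le ha hw.1⟩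
  rw [abs_sub_le_iff]
  constructor <;> linarith [bound x hx, bound y hy]

lemma tendsto_nhds_zero_of_eventually_le {ι : Type*} {l : Filter ι} {I : ι → ℝ} {g : ℝ → ι → ℝ}
    {φ : ℝ → ℝ} (hI : ∀ i, 0 ≤ I i) (hφ : Tendsto φ (𝓝[>] 0) (𝓝 0))
    (hg : ∀ η, Tendsto (g η) l (𝓝 (φ η))) (hIg : ∀ᶠ η in 𝓝[>] 0, ∀ᶠ i in l, I i ≤ g η i) :
    Tendsto I l (𝓝 0) := by
  rw [tendsto_order]
  refine ⟨fun ε hε => .of_forall fun i => hε.trans_le (hI i), fun ε hε => ?_⟩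
  obtain ⟨η, hη, hφη⟩ := (hIg.and (hφ.eventually (gt_mem_nhds hε))).exists
  filter_upwards [hη, (hg η).eventually (gt_mem_nhds hφη)] with i hi hgi
  exact hi.trans_lt hgi

lemma eventually_abs_sub_one_div_mul_log_le {a : ℝ} (ha : 0 < a) {α : ℝ → ℝ} (hα : ∀ x, a ≤ α x)
    {u : ℝ} (hlog : ∀ ε > (0:ℝ), ∃ δ > (0:ℝ), ∀ v : ℝ, v ≠ u → |u - v| < δ →
      |α u - α v| * |Real.log (|u - v|)| ≤ ε)
    (T : ℝ) {η : ℝ} (hη : 0 < η) :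
    ∀ᶠ r in 𝓝[>] 0, ∀ z, |z| ≤ T → |(1 / α u - 1 / α (u + r * z)) * Real.log r| ≤ η := by
  obtain ⟨δ, hδ, hδu⟩ := hlog (η * a ^ 2 / 2) (by positivity)
  have hρ : 0 < min (δ / (|T| + 1)) (1 / (T ^ 2 + 1)) := by positivity
  filter_upwards [Ioo_mem_nhdsGT hρ] with r ⟨hr0, hrρ⟩ z hz
  rcases eq_or_ne z 0 with rfl | hz0
  · simp [hη.le]
  have hrδ : r * (|T| + 1) < δ := (lt_div_iff₀ (by positivity)).1 (hrρ.trans_le (min_le_left _ _))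
  have hrT : r * (T ^ 2 + 1) < 1 :=
    (lt_div_iff₀ (by positivity)).1 (hrρ.trans_le (min_le_right _ _))
  have hzT : |z| ^ 2 ≤ T ^ 2 := pow_le_pow_left₀ (abs_nonneg z) hz 2
  have hdist : |u - (u + r * z)| = r * |z| := by
    rw [sub_add_cancel_left, abs_neg, abs_mul, abs_of_pos hr0]
  have hlogr : |Real.log r| ≤ 2 * |Real.log (|u - (u + r * z)|)| := by
    rw [hdist]
    refine abs_log_le_two_mul_abs_log (by positivity) ?_ (by nlinarith)
    calc (r * |z|) ^ 2 = r * (r * |z| ^ 2) := by ring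
      _ ≤ r * 1 := by gcongr; nlinarith
      _ = r := mul_one r
  have hclose := hδu (u + r * z) (by simp [hr0.ne', hz0])
    (by rw [hdist]; nlinarith [le_abs_self T, abs_nonneg z])
  calc |(1 / α u - 1 / α (u + r * z)) * Real.log r|
      = |1 / α u - 1 / α (u + r * z)| * |Real.log r| := abs_mul _ _
    _ ≤ |α u - α (u + r * z)| / a ^ 2 * (2 * |Real.log (|u - (u + r * z)|)|) :=
      mul_le_mul (abs_one_div_sub_one_div_le ha (hα _) (hα _)) hlogr (abs_nonneg _)
        (by positivity)
    _ = 2 / a ^ 2 * (|α u - α (u + r * z)| * |Real.log (|u - (u + r * z)|)|) := by ring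
    _ ≤ 2 / a ^ 2 * (η * a ^ 2 / 2) := by gcongr
    _ = η := by field_simp

def reverseOUKernel (lam t x : ℝ) : ℝ :=
  Real.exp (-lam * (x - t)) * (Set.Ici t).indicator (fun _ => (1:ℝ)) x

lemma reverseOUKernel_add_mul (lam u t z : ℝ) {r : ℝ} (hr : 0 < r) :
    reverseOUKernel lam (u + r * t) (u + r * z) = reverseOUKernel (lam * r) t z := by
  simp only [reverseOUKernel, Set.indicator, Set.mem_Ici, add_le_add_iff_left,
    mul_le_mul_iff_right₀ hr]
  ring_nf

/-- With `μ = λ r` and `q = r ^ (1/α(u) - 1/α(u + r z))` this is the integrand of the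
localisability condition after the substitution `x = u + r z`. -/
def localIncrement (μ q t z : ℝ) : ℝ :=
  (reverseOUKernel μ t z - reverseOUKernel μ 0 z) / q + sgnIndOpen t z

lemma localIncrement_mul_eq (lam u q t z : ℝ) {r : ℝ} (hr : 0 < r) :
    localIncrement (lam * r) q t z =
      (reverseOUKernel lam (u + r * t) (u + r * z) - reverseOUKernel lam u (u + r * z)) / q +
        sgnIndOpen t z := by
  have hu := reverseOUKernel_add_mul lam u 0 z hr
  rw [mul_zero, add_zero] at hu
  rw [localIncrement, reverseOUKernel_add_mul lam u t z hr, hu]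

section LocalIncrement

variable {μ q t z : ℝ}

lemma localIncrement_of_lt_min (hz : z < min t 0) : localIncrement μ q t z = 0 := by
  obtain ⟨hzt, hz0⟩ := lt_min_iff.1 hz
  rcases le_or_gt 0 t with ht | ht
  · simp [localIncrement, reverseOUKernel, sgnIndOpen, ht, not_le.2 hzt, not_le.2 hz0,
      not_lt.2 hz0.le]
  · simp [localIncrement, reverseOUKernel, sgnIndOpen, not_le.2 ht, not_le.2 hzt, not_le.2 hz0,
      not_lt.2 hzt.le]

lemma localIncrement_of_max_lt (hz : max t 0 < z) :
    localIncrement μ q t z = Real.exp (-μ * z) * (Real.exp (μ * t) - 1) / q := by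
  obtain ⟨htz, hz0⟩ := max_lt_iff.1 hz
  have hs : sgnIndOpen t z = 0 := by
    rcases le_or_gt 0 t with ht | ht
    · simp [sgnIndOpen, ht, not_lt.2 htz.le]
    · simp [sgnIndOpen, not_le.2 ht, not_lt.2 hz0.le]
  simp only [localIncrement, reverseOUKernel, hs, Set.indicator_of_mem (Set.mem_Ici.2 htz.le),
    Set.indicator_of_mem (Set.mem_Ici.2 hz0.le)]
  rw [show -μ * (z - t) = -μ * z + μ * t by ring, Real.exp_add]
  simp only [sub_zero, mul_one, add_zero, mul_sub]

lemma abs_localIncrement_of_mem_Ioo (hz : z ∈ Ioo (min t 0) (max t 0)) :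
    |localIncrement μ q t z| = |Real.exp (-μ * (z - min t 0)) / q - 1| := by
  rcases le_or_gt 0 t with ht | ht
  · rw [min_eq_right ht, max_eq_left ht] at *
    obtain ⟨hz0, hzt⟩ := hz
    rw [← abs_neg]
    simp [localIncrement, reverseOUKernel, sgnIndOpen, ht, hz0, hzt, hz0.le, not_le.2 hzt]
    ring_nf
  · rw [min_eq_left ht.le, max_eq_right ht.le] at *
    obtain ⟨htz, hz0⟩ := hz
    simp [localIncrement, reverseOUKernel, sgnIndOpen, not_le.2 ht, htz, hz0, htz.le, not_le.2 hz0,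
      sub_eq_add_neg]

end LocalIncrement

section LocalIncrementBounds

variable {μ r E c η t z : ℝ}

lemma abs_localIncrement_rpow_le_of_mem_Ioo (hμ : 0 ≤ μ) (hr : 0 < r)
    (hz : z ∈ Ioo (min t 0) (max t 0)) (hEη : |E * Real.log r| ≤ η) (hsmall : μ * |t| + η ≤ 1) :
    |localIncrement μ (r ^ E) t z| ≤ 2 * (μ * |t| + η) := by
  have hwidth : max t 0 - min t 0 = |t| := by simpa using max_sub_min_eq_abs t 0
  have hzm : |z - min t 0| ≤ |t| := by
    rw [abs_of_pos (sub_pos.2 hz.1)]; linarith [hz.2]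
  have hθ : |-μ * (z - min t 0) - Real.log r * E| ≤ μ * |t| + η := by
    calc |-μ * (z - min t 0) - Real.log r * E|
        ≤ |-μ * (z - min t 0)| + |Real.log r * E| := abs_sub _ _
      _ = μ * |z - min t 0| + |E * Real.log r| := by
        rw [abs_mul, abs_neg, abs_of_nonneg hμ, mul_comm (Real.log r)]
      _ ≤ μ * |t| + η := by gcongr
  rw [abs_localIncrement_of_mem_Ioo hz, Real.rpow_def_of_pos hr, ← Real.exp_sub]
  exact (Real.abs_exp_sub_one_le (hθ.trans hsmall)).trans (by gcongr)

lemma abs_localIncrement_rpow_le_of_max_lt (hμ : 0 ≤ μ) (hr0 : 0 < r) (hr1 : r ≤ 1) (hE : E ≤ c)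
    (hz : max t 0 < z) (hsmall : μ * |t| ≤ 1) :
    |localIncrement μ (r ^ E) t z| ≤ 2 * |t| * μ / r ^ c * Real.exp (-μ * z) := by
  have hμt : |μ * t| = μ * |t| := by rw [abs_mul, abs_of_nonneg hμ]
  have hexp : |Real.exp (μ * t) - 1| ≤ 2 * |t| * μ := by
    have := Real.abs_exp_sub_one_le (hμt ▸ hsmall)
    rw [hμt] at this; linarith
  have hrc : r ^ c ≤ r ^ E := Real.rpow_le_rpow_of_exponent_ge hr0 hr1 hE
  have hrc0 : 0 < r ^ c := Real.rpow_pos_of_pos hr0 c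
  rw [localIncrement_of_max_lt hz, abs_div, abs_mul, Real.abs_exp,
    abs_of_pos (Real.rpow_pos_of_pos hr0 E), div_mul_eq_mul_div, mul_comm (Real.exp _)]
  gcongr

end LocalIncrementBounds

lemma integral_pab_localIncrement_le {a b c μ r t η : ℝ} {E : ℝ → ℝ} (ha : 0 < a) (hab : a ≤ b)
    (hμ : 0 < μ) (hr0 : 0 < r) (hr1 : r ≤ 1) (hE : ∀ z, E z ≤ c)
    (hEη : ∀ z, |z| ≤ |t| → |E z * Real.log r| ≤ η) (hsmall : μ * |t| + η ≤ 1) :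
    ∫ z, pab a b (localIncrement μ (r ^ E z) t z) ≤
      |t| * pab a b (2 * (μ * |t| + η)) + (2 * |t| * μ / r ^ c) ^ a / (a * μ) +
        (2 * |t| * μ / r ^ c) ^ b / (b * μ) := by
  have hb : 0 < b := ha.trans_le hab
  have hη : 0 ≤ η := (abs_nonneg _).trans (hEη 0 (by simp))
  set m := min t 0
  set M := max t 0
  have hwidth : M - m = |t| := by simpa using max_sub_min_eq_abs t 0
  have hM : 0 ≤ M := le_max_right t 0
  set K := 2 * |t| * μ / r ^ c
  have hK : 0 ≤ K := by positivity
  set P := pab a b (2 * (μ * |t| + η))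
  set tail : ℝ → ℝ := fun z => (K * Real.exp (-μ * z)) ^ a + (K * Real.exp (-μ * z)) ^ b
  have htail : IntegrableOn tail (Ioi M) :=
    (integrableOn_Ioi_rpow_mul_exp_neg_mul hK ha hμ M).add
      (integrableOn_Ioi_rpow_mul_exp_neg_mul hK hb hμ M)
  have hmid : Integrable ((Ioo m M).indicator fun _ => P) :=
    (integrable_indicator_iff measurableSet_Ioo).2 (integrableOn_const measure_Ioo_lt_top.ne)
  have hdom : ∀ᵐ z, pab a b (localIncrement μ (r ^ E z) t z) ≤
      (Ioo m M).indicator (fun _ => P) z + (Ioi M).indicator tail z := by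
    have hnull : volume ({m, M} : Set ℝ) = 0 := (Set.toFinite _).measure_zero _
    filter_upwards [measure_eq_zero_iff_ae_notMem.1 hnull] with z hz
    simp only [Set.mem_insert_iff, Set.mem_singleton_iff, not_or] at hz
    rcases lt_or_gt_of_ne hz.1 with hzm | hzm
    · rw [localIncrement_of_lt_min hzm, pab_zero ha.ne' hb.ne']
      exact add_nonneg (Set.indicator_nonneg (fun _ _ => pab_nonneg _ _ _) z)
        (Set.indicator_nonneg (fun _ _ => by positivity) z)
    rcases lt_or_gt_of_ne hz.2 with hzM | hzM
    · rw [Set.indicator_of_mem (Set.mem_Ioo.2 ⟨hzm, hzM⟩),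
        Set.indicator_of_notMem (Set.notMem_Ioi.2 hzM.le), add_zero]
      refine pab_le_pab ha.le hb.le (abs_localIncrement_rpow_le_of_mem_Ioo hμ.le hr0 ⟨hzm, hzM⟩
        (hEη z ?_) hsmall)
      rw [← hwidth, abs_le]
      constructor <;> linarith [min_le_max (a := t) (b := 0), min_le_left t 0, min_le_right t 0,
        le_max_left t 0, le_max_right t 0]
    · rw [Set.indicator_of_notMem (fun h => hzM.not_gt h.2),
        Set.indicator_of_mem (Set.mem_Ioi.2 hzM), zero_add]
      exact (pab_le_pab ha.le hb.le (abs_localIncrement_rpow_le_of_max_lt hμ.le hr0 hr1 (hE z)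
        hzM (by linarith))).trans (pab_le_rpow_add_rpow (by positivity))
  calc ∫ z, pab a b (localIncrement μ (r ^ E z) t z)
      ≤ ∫ z, ((Ioo m M).indicator (fun _ => P) z + (Ioi M).indicator tail z) :=
        integral_mono_of_nonneg (.of_forall fun _ => pab_nonneg _ _ _)
          (hmid.add (htail.integrable_indicator measurableSet_Ioi)) hdom
    _ = |t| * P + ((∫ z in Ioi M, (K * Real.exp (-μ * z)) ^ a) +
          ∫ z in Ioi M, (K * Real.exp (-μ * z)) ^ b) := by
        rw [integral_add hmid (htail.integrable_indicator measurableSet_Ioi),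
          integral_indicator measurableSet_Ioo, integral_indicator measurableSet_Ioi,
          setIntegral_const, Real.volume_real_Ioo_of_le (min_le_max), hwidth, smul_eq_mul,
          mul_comm, integral_add (integrableOn_Ioi_rpow_mul_exp_neg_mul hK ha hμ M)
            (integrableOn_Ioi_rpow_mul_exp_neg_mul hK hb hμ M)]
    _ ≤ |t| * P + (K ^ a / (a * μ) + K ^ b / (b * μ)) := by
        gcongr
        · exact setIntegral_Ioi_rpow_mul_exp_neg_mul_le hK ha hμ hM
        · exact setIntegral_Ioi_rpow_mul_exp_neg_mul_le hK hb hμ hM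
    _ = _ := by ring

lemma tendsto_localisation_bound {a b c lam : ℝ} (ha : 0 < a) (hb : 0 < b) (hlam : 0 ≤ lam)
    (hca : 1 < a * (1 - c)) (hcb : 1 < b * (1 - c)) (t η : ℝ) :
    Tendsto (fun r => |t| * pab a b (2 * (lam * r * |t| + η)) +
      (2 * |t| * (lam * r) / r ^ c) ^ a / (a * (lam * r)) +
      (2 * |t| * (lam * r) / r ^ c) ^ b / (b * (lam * r))) (𝓝[>] 0)
      (𝓝 (|t| * pab a b (2 * η))) := by
  have hmid : Continuous fun r => |t| * pab a b (2 * (lam * r * |t| + η)) := by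
    have := continuous_pab ha.le hb.le
    fun_prop
  simpa using (((hmid.tendsto 0).mono_left nhdsWithin_le_nhds).add
    (tendsto_rpow_div_mul_nhdsGT_zero (by positivity) hlam hca)).add
    (tendsto_rpow_div_mul_nhdsGT_zero (by positivity) hlam hcb)

theorem multistable_reverse_OU_localisable_general (a b : ℝ)
    (hb1 : 1 < Real.sqrt b) (hsb : Real.sqrt b < a) (hab : a ≤ b)
    (α : ℝ → ℝ) (hα : ∀ x, α x ∈ Set.Icc a b)
    (lam : ℝ) (hlam : 0 < lam) (u : ℝ)
    (hlog : ∀ ε > (0:ℝ), ∃ δ > (0:ℝ), ∀ v : ℝ, v ≠ u → |u - v| < δ →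
      |α u - α v| * |Real.log (|u - v|)| ≤ ε) :
    ∀ t : ℝ,
      Tendsto (fun r : ℝ => ∫ z : ℝ,
          pab a b
            ((Real.exp (-lam * ((u + r * z) - (u + r * t))) *
                (Set.Ici (u + r * t)).indicator (fun _ => (1:ℝ)) (u + r * z) -
              Real.exp (-lam * ((u + r * z) - u)) *
                (Set.Ici u).indicator (fun _ => (1:ℝ)) (u + r * z)) /
              r ^ (1 / α u - 1 / α (u + r * z)) + sgnIndOpen t z))
        (𝓝[>] (0:ℝ)) (𝓝 0) := by
  intro t
  have ha : 1 < a := hb1.trans hsb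
  have ha0 : 0 < a := one_pos.trans ha
  have hb0 : 0 < b := ha0.trans_le hab
  refine Tendsto.congr' (f₁ := fun r => ∫ z,
    pab a b (localIncrement (lam * r) (r ^ (1 / α u - 1 / α (u + r * z))) t z)) ?_ ?_
  · filter_upwards [self_mem_nhdsWithin] with r (hr : 0 < r)
    exact integral_congr_ae
      (.of_forall fun z => congrArg (pab a b) (localIncrement_mul_eq _ _ _ _ _ hr))
  refine tendsto_nhds_zero_of_eventually_le (fun r => integral_nonneg fun _ => pab_nonneg _ _ _)
    (φ := fun η => |t| * pab a b (2 * η)) ?_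
    (tendsto_localisation_bound ha0 hb0 hlam.le
      (one_lt_mul_one_sub_one_div_sub_one_div_left hb1 hsb)
      (one_lt_mul_one_sub_one_div_sub_one_div_right ha hab) t) ?_
  · simpa [pab_zero ha0.ne' hb0.ne'] using
      ((((continuous_pab ha0.le hb0.le).comp (continuous_const_mul 2)).const_mul |t|).tendsto
        0).mono_left nhdsWithin_le_nhds
  filter_upwards [Ioo_mem_nhdsGT one_pos] with η ⟨hη0, hη1⟩
  have hsmall : ∀ᶠ r in 𝓝[>] 0, lam * r * |t| + η < 1 := by
    have : Continuous fun r => lam * r * |t| + η := by fun_prop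
    exact ((this.tendsto 0).mono_left nhdsWithin_le_nhds).eventually
      (gt_mem_nhds (by simpa using hη1))
  filter_upwards [eventually_abs_sub_one_div_mul_log_le ha0 (fun x => (hα x).1) hlog |t| hη0,
    hsmall, Ioo_mem_nhdsGT one_pos] with r hlogr hsmallr ⟨hr0, hr1⟩
  exact integral_pab_localIncrement_le ha0 hab (mul_pos hlam hr0) hr0 hr1.le
    (fun z => (le_abs_self _).trans (abs_one_div_sub_one_div_le_of_mem_Icc ha0 (hα u) (hα _)))
    hlogr hsmallr.le

/-- localisability of multistable reverse Ornstein–Uhlenbeck motion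
`Y(t) = ∫_t^∞ e^{−λ(x−t)} dM_α(x)`: with kernel `f(t,x) = e^{−λ(x−t)}1_{[t,∞)}(x)`,
for every `t`,
`∫ |(f(u+rt,u+rz) − f(u,u+rz))/r^{1/α(u)−1/α(u+rz)} + s(t,z)|^{a,b} dz → 0`
as `r → 0⁺`; that is, the localisability condition of the main theorem holds at `u`
with index `h₀ = 1/α(u)` and limit kernel `k(t,z) = −s(t,z)`. -/
theorem multistable_reverse_OU_localisable (a b : ℝ)
    (hb1 : 1 < Real.sqrt b) (hsb : Real.sqrt b < a) (hab : a ≤ b) (hb2 : b ≤ 2)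
    (α : ℝ → ℝ) (hαc : Continuous α) (hα : ∀ x, α x ∈ Set.Icc a b)
    (lam : ℝ) (hlam : 0 < lam) (u : ℝ)
    (hlog : ∀ ε > (0:ℝ), ∃ δ > (0:ℝ), ∀ v : ℝ, v ≠ u → |u - v| < δ →
      |α u - α v| * |Real.log (|u - v|)| ≤ ε) :
    ∀ t : ℝ,
      Tendsto (fun r : ℝ => ∫ z : ℝ,
          pab a b
            ((Real.exp (-lam * ((u + r * z) - (u + r * t))) *
                (Set.Ici (u + r * t)).indicator (fun _ => (1:ℝ)) (u + r * z) -
              Real.exp (-lam * ((u + r * z) - u)) *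
                (Set.Ici u).indicator (fun _ => (1:ℝ)) (u + r * z)) /
              r ^ (1 / α u - 1 / α (u + r * z)) + sgnIndOpen t z))
        (𝓝[>] (0:ℝ)) (𝓝 0) :=
  multistable_reverse_OU_localisable_general a b hb1 hsb hab α hα lam hlam u hlog
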